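/- Every XY-stratified program P has a unique stable model, namely its perfect model, and this model is computed by the iterated procedure that initializes counter(0) and repeatedly (1) computes the stable model of the synchronized bistate version syncbi(P) and (2) replaces each old_q relation by the newly computed new_q relation and increments the counter. -/

import Mathlib

/-!
# STATEMENT 10

Every XY-stratified program `P` has a unique stable model — namely its perfect
model (for locally stratified programs the unique stable model is by
definition the perfect model) — and this model is computed by the iterated
procedure that initializes `counter(0)` and repeatedly (1) computes the stable
model of the synchronized bistate version `syncbi(P)` and (2) replaces each
`old_q` relation by the newly computed `new_q` relation and increments the
counter.

The XY-framework (X-rules, Y-rules, exit rules, the bistate version, and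
XY-stratification) is as in Statement 9.  The synchronized bistate version at
counter value `t` is formalized as a ground program over `old`/`new` copies of
the (untimed) recursive atoms: the `old` relations computed at the previous
step are stored as facts, exit rules fire only when their constant temporal
argument equals the counter `t` (the added `counter(Iᵣ)` goal), and the
counter value `t` itself reattaches the temporal argument to the computed
`new` relations (the copy-back rules `q(J,X) ← new_q(X), counter(J)`).
-/
/-! ## Ground normal logic programs -/

/-- A ground normal logic-program rule over ground atoms `α`. -/
structure GRule (α : Type) where
  head : α
  pos : Set α
  neg : Set α

/-- A ground normal logic program. -/
abbrev GProgram (α : Type) := Set (GRule α)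

def GRule.Sat {α : Type} (r : GRule α) (M : Set α) : Prop :=
  r.pos ⊆ M → (∀ a ∈ r.neg, a ∉ M) → r.head ∈ M

def IsModel {α : Type} (P : GProgram α) (M : Set α) : Prop := ∀ r ∈ P, r.Sat M

/-- The Gelfond–Lifschitz reduct. -/
def reduct {α : Type} (P : GProgram α) (M : Set α) : GProgram α :=
  {r | ∃ r' ∈ P, (∀ a ∈ r'.neg, a ∉ M) ∧ r = ⟨r'.head, r'.pos, ∅⟩}

def leastModel {α : Type} (P : GProgram α) : Set α := ⋂₀ {N | IsModel P N}

/-- Gelfond–Lifschitz stable model. -/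
def IsStableModel {α : Type} (P : GProgram α) (M : Set α) : Prop :=
  M = leastModel (reduct P M)

/-- A ground program is locally stratified (Przymusinski) when it admits a
level mapping of ground atoms (into the ordinals) such that in each ground
rule the head's level is at least the level of each positive body atom and
strictly greater than the level of each negated body atom. -/
def LocallyStratified {α : Type} (G : GProgram α) : Prop :=
  ∃ ℓ : α → Ordinal.{0}, ∀ r ∈ G,
    (∀ a ∈ r.pos, ℓ a ≤ ℓ r.head) ∧ (∀ a ∈ r.neg, ℓ a < ℓ r.head)

/-! ## XY-programs -/

/-- Terms: variables and constants. -/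
inductive Term (C : Type) where
  | var (v : ℕ)
  | const (c : C)

def Term.eval {C : Type} (ν : ℕ → C) : Term C → C
  | .var v => ν v
  | .const c => c

/-- The temporal argument of an atom: either `T + k` (an offset `k` from the
temporal variable `T` of the rule) or a constant. -/
inductive TTerm : Type where
  | ofs (k : ℕ)
  | const (c : ℕ)
  deriving DecidableEq

def TTerm.eval (τ : ℕ) : TTerm → ℕ
  | .ofs k => τ + k
  | .const c => c

/-- An atom of a (mutually recursive) predicate `p`, with its distinguished
temporal argument `t` and its ordinary arguments `args`. -/
structure RAtom (P : Type) (arP : P → ℕ) (C : Type) where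
  p : P
  t : TTerm
  args : Fin (arP p) → Term C

/-- An atom of an extensional (database) predicate. -/
structure EAtom (E : Type) (arE : E → ℕ) (C : Type) where
  e : E
  args : Fin (arE e) → Term C

/-- A rule of an XY-program: a head and positive/negative recursive
(`posR`/`negR`) and extensional (`posE`/`negE`) body atoms. -/
structure XYRule (P E : Type) (arP : P → ℕ) (arE : E → ℕ) (C : Type) where
  head : RAtom P arP C
  posR : List (RAtom P arP C)
  negR : List (RAtom P arP C)
  posE : List (EAtom E arE C)
  negE : List (EAtom E arE C)

/-- An X-rule: the temporal argument of every recursive body goal equals that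
of the head. -/
def XYRule.IsXRule {P E : Type} {arP : P → ℕ} {arE : E → ℕ} {C : Type}
    (r : XYRule P E arP arE C) : Prop :=
  ∃ h : ℕ, r.head.t = .ofs h ∧ ∀ a ∈ r.posR ++ r.negR, a.t = .ofs h

/-- A Y-rule: the temporal argument of some recursive body goals is one less
than that of the head (via the successor `J+1`), the others being equal to
it. -/
def XYRule.IsYRule {P E : Type} {arP : P → ℕ} {arE : E → ℕ} {C : Type}
    (r : XYRule P E arP arE C) : Prop :=
  ∃ h : ℕ, r.head.t = .ofs (h + 1) ∧
    (∀ a ∈ r.posR ++ r.negR, a.t = .ofs h ∨ a.t = .ofs (h + 1)) ∧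
    ∃ a ∈ r.posR ++ r.negR, a.t = .ofs h

/-- An exit rule: the head's temporal argument is a constant and the body has
no recursive goals. -/
def XYRule.IsExitRule {P E : Type} {arP : P → ℕ} {arE : E → ℕ} {C : Type}
    (r : XYRule P E arP arE C) : Prop :=
  (∃ c, r.head.t = .const c) ∧ r.posR = [] ∧ r.negR = []

/-- An XY-program: every rule is an X-rule, a Y-rule, or an exit rule. -/
def IsXYProgram {P E : Type} {arP : P → ℕ} {arE : E → ℕ} {C : Type}
    (Pr : List (XYRule P E arP arE C)) : Prop :=
  ∀ r ∈ Pr, r.IsXRule ∨ r.IsYRule ∨ r.IsExitRule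

/-! ## The bistate version -/

/-- Predicates of the bistate version: `new`/`old` copies (`true` = `new`) of
the recursive predicates, plus the extensional predicates. -/
abbrev BiPred (P E : Type) := (Bool × P) ⊕ E

def biar {P E : Type} (arP : P → ℕ) (arE : E → ℕ) : BiPred P E → ℕ :=
  Sum.elim (fun bp => arP bp.2) arE

/-- A non-ground atom of an ordinary (non-temporal) normal program. -/
structure NAtom (Q : Type) (arQ : Q → ℕ) (C : Type) where
  q : Q
  args : Fin (arQ q) → Term C

/-- A non-ground rule of an ordinary normal program. -/
structure NRule (Q : Type) (arQ : Q → ℕ) (C : Type) where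
  head : NAtom Q arQ C
  pos : List (NAtom Q arQ C)
  neg : List (NAtom Q arQ C)

/-- The bistate version of an XY-rule: head predicates get prefix `new`; a
recursive body predicate gets prefix `new` if its temporal argument equals the
head's, and `old` otherwise; temporal arguments are dropped. -/
def XYRule.bistate {P E : Type} {arP : P → ℕ} {arE : E → ℕ} {C : Type}
    (r : XYRule P E arP arE C) : NRule (BiPred P E) (biar arP arE) C where
  head := ⟨Sum.inl (true, r.head.p), r.head.args⟩
  pos := (r.posR.map fun a =>
            (⟨Sum.inl (decide (a.t = r.head.t), a.p), a.args⟩ :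
              NAtom (BiPred P E) (biar arP arE) C)) ++
         r.posE.map fun a => ⟨Sum.inr a.e, a.args⟩
  neg := (r.negR.map fun a =>
            (⟨Sum.inl (decide (a.t = r.head.t), a.p), a.args⟩ :
              NAtom (BiPred P E) (biar arP arE) C)) ++
         r.negE.map fun a => ⟨Sum.inr a.e, a.args⟩

/-- A stratification of an ordinary normal program. -/
def NStratifiedBy {Q : Type} {arQ : Q → ℕ} {C : Type}
    (Pr : List (NRule Q arQ C)) (σ : Q → ℕ) : Prop :=
  ∀ r ∈ Pr, (∀ a ∈ r.pos, σ a.q ≤ σ r.head.q) ∧ (∀ a ∈ r.neg, σ a.q < σ r.head.q)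

/-- An XY-program is XY-stratified when its bistate version is a stratified
program. -/
def XYStratified {P E : Type} {arP : P → ℕ} {arE : E → ℕ} {C : Type}
    (Pr : List (XYRule P E arP arE C)) : Prop :=
  IsXYProgram Pr ∧ ∃ σ : BiPred P E → ℕ, NStratifiedBy (Pr.map XYRule.bistate) σ

/-! ## Ground instantiation of an XY-program -/

/-- Ground atoms: timed ground atoms of the recursive predicates, and ground
atoms of the extensional predicates. -/
abbrev GXAtom (P E : Type) (arP : P → ℕ) (arE : E → ℕ) (C : Type) :=
  (Σ p : P, ℕ × (Fin (arP p) → C)) ⊕ (Σ e : E, Fin (arE e) → C)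

def RAtom.ground {P E : Type} {arP : P → ℕ} {arE : E → ℕ} {C : Type}
    (a : RAtom P arP C) (τ : ℕ) (ν : ℕ → C) : GXAtom P E arP arE C :=
  Sum.inl ⟨a.p, (a.t.eval τ, fun i => (a.args i).eval ν)⟩

def EAtom.ground {P E : Type} {arP : P → ℕ} {arE : E → ℕ} {C : Type}
    (a : EAtom E arE C) (ν : ℕ → C) : GXAtom P E arP arE C :=
  Sum.inr ⟨a.e, fun i => (a.args i).eval ν⟩

/-- The ground instantiation of an XY-program `Pr` over the extensional
database `edb` (`τ` is the value of the temporal variable, `ν` the values of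
the ordinary variables). -/
def groundXY {P E : Type} {arP : P → ℕ} {arE : E → ℕ} {C : Type}
    (Pr : List (XYRule P E arP arE C)) (edb : Set (Σ e : E, Fin (arE e) → C)) :
    GProgram (GXAtom P E arP arE C) :=
  {r | ∃ e ∈ edb, r = ⟨Sum.inr e, ∅, ∅⟩} ∪
  {r | ∃ rl ∈ Pr, ∃ τ : ℕ, ∃ ν : ℕ → C,
        r = ⟨rl.head.ground τ ν,
             {x | ∃ a ∈ rl.posR, x = a.ground τ ν} ∪
               {x | ∃ a ∈ rl.posE, x = a.ground ν},
             {x | ∃ a ∈ rl.negR, x = a.ground τ ν} ∪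
               {x | ∃ a ∈ rl.negE, x = a.ground ν}⟩}

/-! ## The synchronized bistate program of one step of the procedure -/

/-- Untimed ground atoms of the recursive predicates. -/
abbrev BAtom (P : Type) (arP : P → ℕ) (C : Type) := Σ p : P, Fin (arP p) → C

/-- Ground atoms of one step of the iterated procedure: `old`/`new` copies
(`true` = `new`) of the untimed recursive atoms, plus extensional atoms. -/
abbrev StepAtom (P E : Type) (arP : P → ℕ) (arE : E → ℕ) (C : Type) :=
  (Bool × BAtom P arP C) ⊕ (Σ e : E, Fin (arE e) → C)

/-- The ground synchronized bistate program executed at counter value `t`,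
with `O` the contents of the `old` relations (the `new` relations of the
previous step): extensional facts, `old` facts from `O`, and the ground
bistate instances of the rules whose head falls at time `t` (in particular an
exit rule fires only when its constant temporal argument is `t`). -/
def stepProg {P E : Type} {arP : P → ℕ} {arE : E → ℕ} {C : Type}
    (Pr : List (XYRule P E arP arE C)) (edb : Set (Σ e : E, Fin (arE e) → C))
    (t : ℕ) (O : Set (BAtom P arP C)) : GProgram (StepAtom P E arP arE C) :=
  {r | ∃ e ∈ edb, r = ⟨Sum.inr e, ∅, ∅⟩} ∪
  {r | ∃ b ∈ O, r = ⟨Sum.inl (false, b), ∅, ∅⟩} ∪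
  {r | ∃ rl ∈ Pr, (∃ τ : ℕ, rl.head.t.eval τ = t) ∧ ∃ ν : ℕ → C,
        r = ⟨Sum.inl (true, ⟨rl.head.p, fun i => (rl.head.args i).eval ν⟩),
             {x | ∃ a ∈ rl.posR,
                x = Sum.inl (decide (a.t = rl.head.t),
                      ⟨a.p, fun i => (a.args i).eval ν⟩)} ∪
               {x | ∃ a ∈ rl.posE, x = Sum.inr ⟨a.e, fun i => (a.args i).eval ν⟩},
             {x | ∃ a ∈ rl.negR,
                x = Sum.inl (decide (a.t = rl.head.t),
                      ⟨a.p, fun i => (a.args i).eval ν⟩)} ∪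
               {x | ∃ a ∈ rl.negE, x = Sum.inr ⟨a.e, fun i => (a.args i).eval ν⟩}⟩}

/-- The contents of the `old` relations at step `t` of a run producing the
`new` relations `N`: empty at step `0`, `N (t-1)` afterwards. -/
def oldAt {P : Type} {arP : P → ℕ} {C : Type}
    (N : ℕ → Set (BAtom P arP C)) : ℕ → Set (BAtom P arP C)
  | 0 => ∅
  | t + 1 => N t

/-- Reassembling the timed model from the per-step `new` relations (the
copy-back rules `q(J,X) ← new_q(X), counter(J)`), together with the database. -/
def assemble {P E : Type} {arP : P → ℕ} {arE : E → ℕ} {C : Type}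
    (N : ℕ → Set (BAtom P arP C)) (edb : Set (Σ e : E, Fin (arE e) → C)) :
    Set (GXAtom P E arP arE C) :=
  {x | ∃ t : ℕ, ∃ b : BAtom P arP C, b ∈ N t ∧ x = Sum.inl ⟨b.1, (t, b.2)⟩} ∪
  {x | ∃ e ∈ edb, x = Sum.inr e}

/-!
An XY-stratified program becomes, once grounded, stratified by natural-number levels: an atom
`q(t, x̄)` gets the level `t * (S + 1) + σ(new_q)`, where `σ` stratifies the bistate version and
is capped at a bound `S` of its values on head predicates, so time is the major key. A program
stratified by levels in `ℕ` has exactly one stable model, its perfect model, built stratum by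
stratum.

A run of the iterated procedure computes at counter value `t` the atoms of time `t`: each ground
instance of a rule with head at time `t` is the timed reading of an instance of the synchronized
bistate program, `old` atoms being read at time `t - 1`. Hence the assembled model satisfies the
reduct of the ground program, and by induction on time the timed reading of each step's model
lies inside every model of that reduct.
-/

section GroundProgram

variable {α : Type} {G : GProgram α} {M N : Set α}

theorem isModel_reduct_iff :
    IsModel (reduct G M) N ↔
      ∀ r ∈ G, (∀ a ∈ r.neg, a ∉ M) → r.pos ⊆ N → r.head ∈ N := by
  constructor
  · intro h r hr hneg hpos
    exact h ⟨r.head, r.pos, ∅⟩ ⟨r, hr, hneg, rfl⟩ hpos fun _ h => absurd h (Set.notMem_empty _)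
  · rintro h _ ⟨r, hr, hneg, rfl⟩ hpos -
    exact h r hr hneg hpos

theorem leastModel_subset (h : IsModel G N) : leastModel G ⊆ N :=
  Set.sInter_subset_of_mem h

theorem isModel_reduct_leastModel (G : GProgram α) (M : Set α) :
    IsModel (reduct G M) (leastModel (reduct G M)) :=
  isModel_reduct_iff.2 fun r hr hneg hpos =>
    Set.mem_sInter.2 fun _ hN =>
      isModel_reduct_iff.1 hN r hr hneg (hpos.trans (leastModel_subset hN))

theorem isStableModel_of_isModel_reduct (hM : IsModel (reduct G M) M)
    (hleast : ∀ N, IsModel (reduct G M) N → M ⊆ N) : IsStableModel G M :=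
  (Set.subset_sInter hleast).antisymm (leastModel_subset hM)

namespace IsStableModel

variable (hM : IsStableModel G M)
include hM

theorem isModel_reduct : IsModel (reduct G M) M := by
  have h := isModel_reduct_leastModel G M
  rwa [← hM] at h

theorem subset_of_isModel_reduct (hN : IsModel (reduct G M) N) : M ⊆ N := by
  rw [hM]
  exact leastModel_subset hN

theorem head_mem {r : GRule α} (hr : r ∈ G) (hpos : r.pos ⊆ M) (hneg : ∀ a ∈ r.neg, a ∉ M) :
    r.head ∈ M :=
  isModel_reduct_iff.1 hM.isModel_reduct r hr hneg hpos

theorem fact_mem {a : α} (ha : (⟨a, ∅, ∅⟩ : GRule α) ∈ G) : a ∈ M :=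
  hM.head_mem ha (Set.empty_subset M) (by simp)

theorem exists_rule_of_mem {x : α} (hx : x ∈ M) : ∃ r ∈ G, r.head = x := by
  by_contra! hc
  have hmod : IsModel (reduct G M) (M \ {x}) :=
    isModel_reduct_iff.2 fun r hr hneg hpos =>
      ⟨hM.head_mem hr (hpos.trans Set.sdiff_subset) hneg, hc r hr⟩
  exact (hM.subset_of_isModel_reduct hmod hx).2 rfl

end IsStableModel

end GroundProgram

section Stratified

variable {α : Type} {G : GProgram α} {ℓ : α → ℕ} {M N : Set α}

def StratifiedBy (G : GProgram α) (ℓ : α → ℕ) : Prop :=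
  ∀ r ∈ G, (∀ a ∈ r.pos, ℓ a ≤ ℓ r.head) ∧ (∀ a ∈ r.neg, ℓ a < ℓ r.head)

def perfectStage (G : GProgram α) (ℓ : α → ℕ) : ℕ → Set α
  | 0 => ∅
  | n + 1 => leastModel (reduct {r ∈ G | ℓ r.head ≤ n} (perfectStage G ℓ n))

def perfectModel (G : GProgram α) (ℓ : α → ℕ) : Set α := ⋃ n, perfectStage G ℓ n

namespace StratifiedBy

variable (hℓ : StratifiedBy G ℓ)
include hℓ

theorem mono {G' : GProgram α} (h : G' ⊆ G) : StratifiedBy G' ℓ :=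
  fun r hr => hℓ r (h hr)

theorem isModel_reduct_union_levelGe (n : ℕ)
    (hN : ∀ r ∈ G, (∀ a ∈ r.neg, a ∉ M) → ℓ r.head < n → r.pos ⊆ N → r.head ∈ N) :
    IsModel (reduct G M) (N ∪ {a | n ≤ ℓ a}) := by
  refine isModel_reduct_iff.2 fun r hr hneg hpos => ?_
  rcases lt_or_ge (ℓ r.head) n with hlt | hge
  · refine Or.inl (hN r hr hneg hlt fun a ha => ?_)
    have : ℓ a < n := ((hℓ r hr).1 a ha).trans_lt hlt
    exact (hpos ha).resolve_right this.not_ge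
  · exact Or.inr hge

theorem perfectStage_succ_subset_and_restrict (n : ℕ) :
    perfectStage G ℓ n ⊆ perfectStage G ℓ (n + 1) ∧
      ∀ a ∈ perfectStage G ℓ (n + 1), ℓ a < n → a ∈ perfectStage G ℓ n := by
  induction n with
  | zero => exact ⟨Set.empty_subset _, fun a _ h => absurd h (Nat.not_lt_zero _)⟩
  | succ n ih =>
    constructor
    · refine leastModel_subset (isModel_reduct_iff.2 fun r hr hneg hpos => ?_)
      refine isModel_reduct_iff.1 (isModel_reduct_leastModel _ _) r ⟨hr.1, Nat.le_succ_of_le hr.2⟩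
        (fun a ha ha' => ?_) hpos
      exact hneg a ha (ih.2 a ha' (((hℓ r hr.1).2 a ha).trans_le hr.2))
    · intro a ha hlt
      have hstrat := hℓ.mono (Set.sep_subset G fun r => ℓ r.head ≤ n + 1)
      have hmod := hstrat.isModel_reduct_union_levelGe
        (M := perfectStage G ℓ (n + 1)) (N := perfectStage G ℓ (n + 1)) (n + 1)
        fun r hr hneg hlt hpos =>
          isModel_reduct_iff.1 (isModel_reduct_leastModel _ _) r ⟨hr.1, Nat.lt_succ_iff.1 hlt⟩
            (fun a ha ha' => hneg a ha (ih.1 ha')) hpos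
      exact (leastModel_subset hmod ha).resolve_right hlt.not_ge

theorem mem_perfectStage_of_lt {a : α} {m n : ℕ} (ha : a ∈ perfectStage G ℓ n)
    (hm : ℓ a < m) : a ∈ perfectStage G ℓ m := by
  rcases le_total n m with hnm | hmn
  · exact monotone_nat_of_le_succ (fun k => (hℓ.perfectStage_succ_subset_and_restrict k).1)
      hnm ha
  · induction n, hmn using Nat.le_induction with
    | base => exact ha
    | succ n hmn ih =>
      exact ih ((hℓ.perfectStage_succ_subset_and_restrict n).2 a ha (hm.trans_le hmn))

theorem isStableModel_perfectModel : IsStableModel G (perfectModel G ℓ) := by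
  refine isStableModel_of_isModel_reduct (isModel_reduct_iff.2 fun r hr hneg hpos => ?_)
    fun N hN => Set.iUnion_subset fun n => ?_
  · have hpos' : r.pos ⊆ perfectStage G ℓ (ℓ r.head + 1) := fun a ha => by
      obtain ⟨n, hn⟩ := Set.mem_iUnion.1 (hpos ha)
      exact hℓ.mem_perfectStage_of_lt hn (Nat.lt_succ_of_le ((hℓ r hr).1 a ha))
    refine Set.mem_iUnion.2 ⟨ℓ r.head + 1, ?_⟩
    exact isModel_reduct_iff.1 (isModel_reduct_leastModel _ _) r ⟨hr, le_rfl⟩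
      (fun a ha ha' => hneg a ha (Set.mem_iUnion.2 ⟨_, ha'⟩)) hpos'
  · cases n with
    | zero => exact Set.empty_subset N
    | succ n =>
      refine leastModel_subset (isModel_reduct_iff.2 fun r hr hneg' hpos => ?_)
      refine isModel_reduct_iff.1 hN r hr.1 (fun a ha ha' => ?_) hpos
      obtain ⟨k, hk⟩ := Set.mem_iUnion.1 ha'
      exact hneg' a ha
        (hℓ.mem_perfectStage_of_lt hk (((hℓ r hr.1).2 a ha).trans_le hr.2))

theorem mem_of_agree_below {A B : Set α} (hA : IsStableModel G A) (hB : IsStableModel G B)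
    {n : ℕ} (hAB : ∀ a, ℓ a < n → (a ∈ A ↔ a ∈ B)) {a : α} (ha : a ∈ A) (hlt : ℓ a < n + 1) :
    a ∈ B := by
  have hmod := hℓ.isModel_reduct_union_levelGe (M := A) (N := B) (n + 1)
    fun r hr hneg hhead hpos => hB.head_mem hr hpos fun b hb hbB =>
      hneg b hb ((hAB b (((hℓ r hr).2 b hb).trans_le (Nat.lt_succ_iff.1 hhead))).2 hbB)
  exact (hA.subset_of_isModel_reduct hmod ha).resolve_right hlt.not_ge

theorem eq_of_isStableModel {M₁ M₂ : Set α} (h₁ : IsStableModel G M₁)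
    (h₂ : IsStableModel G M₂) : M₁ = M₂ := by
  have below : ∀ n a, ℓ a < n → (a ∈ M₁ ↔ a ∈ M₂) := by
    intro n
    induction n with
    | zero => exact fun a h => absurd h (Nat.not_lt_zero _)
    | succ n ih =>
      exact fun a hlt => ⟨fun ha => hℓ.mem_of_agree_below h₁ h₂ ih ha hlt,
        fun ha => hℓ.mem_of_agree_below h₂ h₁ (fun b hb => (ih b hb).symm) ha hlt⟩
  exact Set.ext fun a => below (ℓ a + 1) a (Nat.lt_succ_self _)

theorem existsUnique_isStableModel : ∃! M, IsStableModel G M :=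
  ⟨perfectModel G ℓ, hℓ.isStableModel_perfectModel,
    fun _ hM => hℓ.eq_of_isStableModel hM hℓ.isStableModel_perfectModel⟩

end StratifiedBy

end Stratified

section GroundStratification

variable {P E C : Type} {arP : P → ℕ} {arE : E → ℕ}

theorem IsXYProgram.time_eq_or_succ {Pr : List (XYRule P E arP arE C)} (hXY : IsXYProgram Pr)
    {rl : XYRule P E arP arE C} (hrl : rl ∈ Pr) {a : RAtom P arP C}
    (ha : a ∈ rl.posR ++ rl.negR) :
    a.t = rl.head.t ∨ ∃ h, a.t = .ofs h ∧ rl.head.t = .ofs (h + 1) := by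
  rcases hXY rl hrl with ⟨h, hh, hb⟩ | ⟨h, hh, hb, -⟩ | ⟨-, hp, hn⟩
  · exact Or.inl ((hb a ha).trans hh.symm)
  · rcases hb a ha with h1 | h1
    · exact Or.inr ⟨h, h1, hh⟩
    · exact Or.inl (h1.trans hh.symm)
  · simp [hp, hn] at ha

def xyLevel (σ : BiPred P E → ℕ) (S : ℕ) : GXAtom P E arP arE C → ℕ :=
  Sum.elim (fun s => s.2.1 * (S + 1) + min (σ (.inl (true, s.1))) S)
    fun e => min (σ (.inr e.1)) S

section

variable {Pr : List (XYRule P E arP arE C)} (hXY : IsXYProgram Pr) {rl : XYRule P E arP arE C}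
  (hrl : rl ∈ Pr) {a : RAtom P arP C} (ha : a ∈ rl.posR ++ rl.negR) {σ : BiPred P E → ℕ}
  {S τ : ℕ} (ν : ℕ → C)
include hXY hrl ha

theorem xyLevel_ground_lt_head_of_time_ne (h : a.t ≠ rl.head.t) :
    xyLevel σ S (a.ground τ ν : GXAtom P E arP arE C) <
      xyLevel σ S (rl.head.ground τ ν : GXAtom P E arP arE C) := by
  obtain ⟨k, ha, hhead⟩ := (hXY.time_eq_or_succ hrl ha).resolve_left h
  have hmin := min_le_right (σ (.inl (true, a.p))) S
  have hsucc : (τ + (k + 1)) * (S + 1) = (τ + k) * (S + 1) + (S + 1) := by ring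
  simp only [xyLevel, RAtom.ground, Sum.elim_inl, ha, hhead, TTerm.eval]
  omega

theorem xyLevel_ground_le_head
    (hle : σ (.inl (decide (a.t = rl.head.t), a.p)) ≤ σ (.inl (true, rl.head.p))) :
    xyLevel σ S (a.ground τ ν : GXAtom P E arP arE C) ≤
      xyLevel σ S (rl.head.ground τ ν : GXAtom P E arP arE C) := by
  by_cases h : a.t = rl.head.t
  · rw [decide_eq_true h] at hle
    simp only [xyLevel, RAtom.ground, Sum.elim_inl, h]
    omega
  · exact (xyLevel_ground_lt_head_of_time_ne hXY hrl ha ν h).le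

theorem xyLevel_ground_lt_head (hS : σ (.inl (true, rl.head.p)) ≤ S)
    (hlt : σ (.inl (decide (a.t = rl.head.t), a.p)) < σ (.inl (true, rl.head.p))) :
    xyLevel σ S (a.ground τ ν : GXAtom P E arP arE C) <
      xyLevel σ S (rl.head.ground τ ν : GXAtom P E arP arE C) := by
  by_cases h : a.t = rl.head.t
  · rw [decide_eq_true h] at hlt
    simp only [xyLevel, RAtom.ground, Sum.elim_inl, h]
    omega
  · exact xyLevel_ground_lt_head_of_time_ne hXY hrl ha ν h

end

theorem XYStratified.exists_stratifiedBy_groundXY {Pr : List (XYRule P E arP arE C)}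
    (hxy : XYStratified Pr) (edb : Set (Σ e : E, Fin (arE e) → C)) :
    ∃ ℓ, StratifiedBy (groundXY Pr edb) ℓ := by
  obtain ⟨hXY, σ, hσ⟩ := hxy
  set S := (Pr.map fun rl => σ (.inl (true, rl.head.p))).sum
  refine ⟨xyLevel σ S, ?_⟩
  rintro r (⟨e, -, rfl⟩ | ⟨rl, hrl, τ, ν, rfl⟩)
  · simp
  obtain ⟨hσpos, hσneg⟩ := hσ rl.bistate (List.mem_map_of_mem hrl)
  have hS : σ (.inl (true, rl.head.p)) ≤ S := List.le_sum_of_mem (List.mem_map_of_mem hrl)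
  constructor
  · rintro x (⟨a, ha, rfl⟩ | ⟨a, ha, rfl⟩)
    · exact xyLevel_ground_le_head hXY hrl (List.mem_append_left _ ha) ν
        (hσpos _ (List.mem_append_left _ (List.mem_map_of_mem ha)))
    · have := hσpos _ (List.mem_append_right _ (List.mem_map_of_mem ha))
      simp only [xyLevel, XYRule.bistate, RAtom.ground, EAtom.ground, Sum.elim_inl,
        Sum.elim_inr] at this ⊢
      omega
  · rintro x (⟨a, ha, rfl⟩ | ⟨a, ha, rfl⟩)
    · exact xyLevel_ground_lt_head hXY hrl (List.mem_append_right _ ha) ν hS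
        (hσneg _ (List.mem_append_left _ (List.mem_map_of_mem ha)))
    · have := hσneg _ (List.mem_append_right _ (List.mem_map_of_mem ha))
      simp only [xyLevel, XYRule.bistate, RAtom.ground, EAtom.ground, Sum.elim_inl,
        Sum.elim_inr] at this ⊢
      omega

end GroundStratification

section Run

variable {P E C : Type} {arP : P → ℕ} {arE : E → ℕ}

def IsRun (Pr : List (XYRule P E arP arE C)) (edb : Set (Σ e : E, Fin (arE e) → C))
    (N : ℕ → Set (BAtom P arP C)) (Ms : ℕ → Set (StepAtom P E arP arE C)) : Prop :=
  ∀ t, IsStableModel (stepProg Pr edb t (oldAt N t)) (Ms t) ∧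
    N t = {b | Sum.inl (true, b) ∈ Ms t}

def GRule.map {α β : Type} (f : α → β) (r : GRule α) : GRule β :=
  ⟨f r.head, f '' r.pos, f '' r.neg⟩

def XYRule.groundInst (rl : XYRule P E arP arE C) (τ : ℕ) (ν : ℕ → C) :
    GRule (GXAtom P E arP arE C) :=
  ⟨rl.head.ground τ ν,
    {x | ∃ a ∈ rl.posR, x = a.ground τ ν} ∪ {x | ∃ a ∈ rl.posE, x = a.ground ν},
    {x | ∃ a ∈ rl.negR, x = a.ground τ ν} ∪ {x | ∃ a ∈ rl.negE, x = a.ground ν}⟩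

def XYRule.stepInst (rl : XYRule P E arP arE C) (ν : ℕ → C) :
    GRule (StepAtom P E arP arE C) :=
  ⟨Sum.inl (true, ⟨rl.head.p, fun i => (rl.head.args i).eval ν⟩),
    {x | ∃ a ∈ rl.posR,
      x = Sum.inl (decide (a.t = rl.head.t), ⟨a.p, fun i => (a.args i).eval ν⟩)} ∪
      {x | ∃ a ∈ rl.posE, x = Sum.inr ⟨a.e, fun i => (a.args i).eval ν⟩},
    {x | ∃ a ∈ rl.negR,
      x = Sum.inl (decide (a.t = rl.head.t), ⟨a.p, fun i => (a.args i).eval ν⟩)} ∪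
      {x | ∃ a ∈ rl.negE, x = Sum.inr ⟨a.e, fun i => (a.args i).eval ν⟩}⟩

theorem XYRule.groundInst_mem_groundXY {Pr : List (XYRule P E arP arE C)}
    {rl : XYRule P E arP arE C} (hrl : rl ∈ Pr) (edb : Set (Σ e : E, Fin (arE e) → C))
    (τ : ℕ) (ν : ℕ → C) : rl.groundInst τ ν ∈ groundXY Pr edb :=
  Or.inr ⟨rl, hrl, τ, ν, rfl⟩

/-- The value given to an `old` atom at `t = 0` is junk; no rule of step `0` mentions one. -/
def timedAtom (t : ℕ) : StepAtom P E arP arE C → GXAtom P E arP arE C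
  | .inl (true, b) => .inl ⟨b.1, (t, b.2)⟩
  | .inl (false, b) => .inl ⟨b.1, (t - 1, b.2)⟩
  | .inr e => .inr e

theorem image_setOf_exists_mem_eq {ι α β : Type*} {l : List ι} {f : α → β} {g : ι → α}
    {h : ι → β} (hfg : ∀ i ∈ l, f (g i) = h i) :
    f '' {x | ∃ i ∈ l, x = g i} = {y | ∃ i ∈ l, y = h i} := by
  ext y
  constructor
  · rintro ⟨_, ⟨i, hi, rfl⟩, rfl⟩
    exact ⟨i, hi, hfg i hi⟩
  · rintro ⟨i, hi, rfl⟩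
    exact ⟨g i, ⟨i, hi, rfl⟩, hfg i hi⟩

section Instances

variable {Pr : List (XYRule P E arP arE C)} (hXY : IsXYProgram Pr) {rl : XYRule P E arP arE C}
  (hrl : rl ∈ Pr) (τ : ℕ) (ν : ℕ → C)
include hXY hrl

theorem timedAtom_stepInst_body {a : RAtom P arP C} (ha : a ∈ rl.posR ++ rl.negR) :
    timedAtom (rl.head.t.eval τ)
        (Sum.inl (decide (a.t = rl.head.t), ⟨a.p, fun i => (a.args i).eval ν⟩) :
          StepAtom P E arP arE C) = a.ground τ ν := by
  rcases hXY.time_eq_or_succ hrl ha with h | ⟨k, ha, hhead⟩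
  · simp [timedAtom, RAtom.ground, h]
  · simp [timedAtom, RAtom.ground, ha, hhead, TTerm.eval]

theorem groundInst_eq_map_stepInst :
    rl.groundInst τ ν = (rl.stepInst ν).map (timedAtom (rl.head.t.eval τ)) := by
  have hpos := fun a ha => timedAtom_stepInst_body hXY hrl τ ν (a := a) (List.mem_append_left _ ha)
  have hneg := fun a ha => timedAtom_stepInst_body hXY hrl τ ν (a := a) (List.mem_append_right _ ha)
  simp only [XYRule.groundInst, XYRule.stepInst, GRule.map, Set.image_union,
    image_setOf_exists_mem_eq hpos, image_setOf_exists_mem_eq hneg,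
    image_setOf_exists_mem_eq (fun _ _ => rfl)]
  rfl

theorem head_time_ne_zero_of_old_mem_stepInst {x : StepAtom P E arP arE C}
    (hx : x ∈ (rl.stepInst ν).pos ∪ (rl.stepInst ν).neg) {b : BAtom P arP C}
    (hb : x = Sum.inl (false, b)) : rl.head.t.eval τ ≠ 0 := by
  obtain ⟨a, ha, hxa⟩ : ∃ a ∈ rl.posR ++ rl.negR,
      x = Sum.inl (decide (a.t = rl.head.t), ⟨a.p, fun i => (a.args i).eval ν⟩) := by
    rcases hx with (⟨a, ha, rfl⟩ | ⟨a, -, rfl⟩) | (⟨a, ha, rfl⟩ | ⟨a, -, rfl⟩)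
    · exact ⟨a, List.mem_append_left _ ha, rfl⟩
    · simp at hb
    · exact ⟨a, List.mem_append_right _ ha, rfl⟩
    · simp at hb
  have hne : a.t ≠ rl.head.t := by simp_all
  obtain ⟨k, -, hhead⟩ := (hXY.time_eq_or_succ hrl ha).resolve_left hne
  simp [hhead, TTerm.eval]

end Instances

section StableStep

variable {Pr : List (XYRule P E arP arE C)} {edb : Set (Σ e : E, Fin (arE e) → C)} {t : ℕ}
  {O : Set (BAtom P arP C)} {M : Set (StepAtom P E arP arE C)}
  (hM : IsStableModel (stepProg Pr edb t O) M)
include hM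

theorem IsStableModel.stepProg_inr_mem_iff {e : Σ e : E, Fin (arE e) → C} :
    (Sum.inr e : StepAtom P E arP arE C) ∈ M ↔ e ∈ edb := by
  refine ⟨fun h => ?_, fun h => hM.fact_mem (Or.inl (Or.inl ⟨e, h, rfl⟩))⟩
  obtain ⟨r, (⟨e', he', rfl⟩ | ⟨b, -, rfl⟩) | ⟨rl, -, -, ν, rfl⟩, hhead⟩ :=
    hM.exists_rule_of_mem h
  · exact Sum.inr_injective hhead ▸ he'
  · simp at hhead
  · simp at hhead

theorem IsStableModel.stepProg_old_mem_iff {b : BAtom P arP C} :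
    (Sum.inl (false, b) : StepAtom P E arP arE C) ∈ M ↔ b ∈ O := by
  refine ⟨fun h => ?_, fun h => hM.fact_mem (Or.inl (Or.inr ⟨b, h, rfl⟩))⟩
  obtain ⟨r, (⟨e', -, rfl⟩ | ⟨b', hb', rfl⟩) | ⟨rl, -, -, ν, rfl⟩, hhead⟩ :=
    hM.exists_rule_of_mem h
  · simp at hhead
  · simp only [Sum.inl.injEq, Prod.mk.injEq, true_and] at hhead
    exact hhead ▸ hb'
  · simp at hhead

end StableStep

theorem mem_assemble_inl {N : ℕ → Set (BAtom P arP C)} {edb : Set (Σ e : E, Fin (arE e) → C)}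
    {t : ℕ} {b : BAtom P arP C} :
    (Sum.inl ⟨b.1, (t, b.2)⟩ : GXAtom P E arP arE C) ∈ assemble N edb ↔ b ∈ N t := by
  constructor
  · rintro (⟨t', b', hb', h⟩ | ⟨e, -, h⟩)
    · obtain ⟨p, f⟩ := b
      obtain ⟨p', f'⟩ := b'
      simp only [Sum.inl.injEq, Sigma.mk.injEq] at h
      obtain ⟨rfl, h⟩ := h
      simp only [heq_eq_eq, Prod.mk.injEq] at h
      obtain ⟨rfl, rfl⟩ := h
      exact hb'
    · simp at h
  · exact fun h => Or.inl ⟨t, b, h, rfl⟩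

theorem mem_assemble_inr {N : ℕ → Set (BAtom P arP C)} {edb : Set (Σ e : E, Fin (arE e) → C)}
    {e : Σ e : E, Fin (arE e) → C} :
    (Sum.inr e : GXAtom P E arP arE C) ∈ assemble N edb ↔ e ∈ edb := by
  constructor
  · rintro (⟨t, b, -, h⟩ | ⟨e', he', h⟩)
    · simp at h
    · exact Sum.inr_injective h ▸ he'
  · exact fun h => Or.inr ⟨e, h, rfl⟩

namespace IsRun

variable {Pr : List (XYRule P E arP arE C)} {edb : Set (Σ e : E, Fin (arE e) → C)}
  {N : ℕ → Set (BAtom P arP C)} {Ms : ℕ → Set (StepAtom P E arP arE C)}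
  (hrun : IsRun Pr edb N Ms)
include hrun

theorem new_mem_iff {t : ℕ} {b : BAtom P arP C} :
    (Sum.inl (true, b) : StepAtom P E arP arE C) ∈ Ms t ↔ b ∈ N t := by
  rw [(hrun t).2]
  rfl

theorem mem_iff_timedAtom_mem_assemble {t : ℕ} {x : StepAtom P E arP arE C}
    (hx : ∀ b, x = Sum.inl (false, b) → t ≠ 0) :
    x ∈ Ms t ↔ timedAtom t x ∈ assemble N edb := by
  rcases x with ⟨_ | _, b⟩ | e
  · obtain ⟨s, rfl⟩ := Nat.exists_eq_succ_of_ne_zero (hx b rfl)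
    exact ((hrun _).1.stepProg_old_mem_iff).trans (mem_assemble_inl (t := s)).symm
  · exact hrun.new_mem_iff.trans mem_assemble_inl.symm
  · exact ((hrun t).1.stepProg_inr_mem_iff).trans mem_assemble_inr.symm

theorem mem_stepInst_body_iff (hXY : IsXYProgram Pr) {rl : XYRule P E arP arE C} (hrl : rl ∈ Pr)
    (τ : ℕ) (ν : ℕ → C) {x : StepAtom P E arP arE C}
    (hx : x ∈ (rl.stepInst ν).pos ∪ (rl.stepInst ν).neg) :
    x ∈ Ms (rl.head.t.eval τ) ↔ timedAtom (rl.head.t.eval τ) x ∈ assemble N edb :=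
  hrun.mem_iff_timedAtom_mem_assemble fun _ hb =>
    head_time_ne_zero_of_old_mem_stepInst hXY hrl τ ν hx hb

theorem isModel_reduct_assemble (hXY : IsXYProgram Pr) :
    IsModel (reduct (groundXY Pr edb) (assemble N edb)) (assemble N edb) := by
  refine isModel_reduct_iff.2 ?_
  rintro r (⟨e, he, rfl⟩ | ⟨rl, hrl, τ, ν, hr⟩) hneg hpos
  · exact mem_assemble_inr.2 he
  obtain rfl : r = (rl.stepInst ν).map (timedAtom (rl.head.t.eval τ)) :=
    hr.trans (groundInst_eq_map_stepInst hXY hrl τ ν)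
  have hbody := fun {x} => hrun.mem_stepInst_body_iff hXY hrl τ ν (x := x)
  have hhead := (hrun _).1.head_mem (Or.inr ⟨rl, hrl, ⟨τ, rfl⟩, ν, rfl⟩ : rl.stepInst ν ∈ _)
    (fun x hx => (hbody (Or.inl hx)).2 (hpos ⟨x, hx, rfl⟩))
    (fun x hx hxM => hneg _ ⟨x, hx, rfl⟩ ((hbody (Or.inr hx)).1 hxM))
  exact mem_assemble_inl.2 (hrun.new_mem_iff.1 hhead)

theorem assemble_subset_of_isModel_reduct (hXY : IsXYProgram Pr) {A : Set (GXAtom P E arP arE C)}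
    (hA : IsModel (reduct (groundXY Pr edb) (assemble N edb)) A) : assemble N edb ⊆ A := by
  have hedb : ∀ e ∈ edb, (Sum.inr e : GXAtom P E arP arE C) ∈ A := fun e he =>
    isModel_reduct_iff.1 hA _ (Or.inl ⟨e, he, rfl⟩) (fun _ h => absurd h (Set.notMem_empty _))
      (Set.empty_subset A)
  have hstep : ∀ t, Ms t ⊆ timedAtom t ⁻¹' A := by
    intro t
    induction t using Nat.strong_induction_on with
    | _ t ih =>
    refine (hrun t).1.subset_of_isModel_reduct (isModel_reduct_iff.2 ?_)
    rintro r ((⟨e, he, rfl⟩ | ⟨b, hb, rfl⟩) | ⟨rl, hrl, ⟨τ, rfl⟩, ν, rfl⟩) hneg hpos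
    · exact hedb e he
    · cases t with
      | zero => exact absurd hb (Set.notMem_empty b)
      | succ s => exact ih s (Nat.lt_succ_self s) (hrun.new_mem_iff.2 hb)
    · have hground := isModel_reduct_iff.1 hA _ (rl.groundInst_mem_groundXY hrl edb τ ν)
      rw [groundInst_eq_map_stepInst hXY hrl] at hground
      refine hground (fun _ ⟨x, hx, hxy⟩ hxA => ?_) (Set.image_subset_iff.2 hpos)
      subst hxy
      exact hneg x hx ((hrun.mem_stepInst_body_iff hXY hrl τ ν (Or.inr hx)).2 hxA)
  rintro x (⟨t, b, hb, rfl⟩ | ⟨e, he, rfl⟩)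
  · exact hstep t (hrun.new_mem_iff.2 hb)
  · exact hedb e he

theorem isStableModel_assemble (hXY : IsXYProgram Pr) :
    IsStableModel (groundXY Pr edb) (assemble N edb) :=
  isStableModel_of_isModel_reduct (hrun.isModel_reduct_assemble hXY)
    fun _ => hrun.assemble_subset_of_isModel_reduct hXY

end IsRun

end Run

/-- Every XY-stratified program `P` (over any extensional
database) has a unique stable model — its perfect model — and every run of the
iterated procedure (start with `counter(0)`; repeatedly compute a stable model
of the synchronized bistate version, copy `new` into `old`, increment the
counter) assembles exactly to this stable model. -/
theorem xy_stratified_unique_stable_model_and_iterated_computation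
    {P E C : Type} {arP : P → ℕ} {arE : E → ℕ}
    (Pr : List (XYRule P E arP arE C)) (hxy : XYStratified Pr)
    (edb : Set (Σ e : E, Fin (arE e) → C)) :
    (∃! M, IsStableModel (groundXY Pr edb) M) ∧
    ∀ (N : ℕ → Set (BAtom P arP C)) (Ms : ℕ → Set (StepAtom P E arP arE C)),
      (∀ t, IsStableModel (stepProg Pr edb t (oldAt N t)) (Ms t) ∧
        N t = {b | Sum.inl (true, b) ∈ Ms t}) →
      IsStableModel (groundXY Pr edb) (assemble N edb) := by
  obtain ⟨ℓ, hℓ⟩ := hxy.exists_stratifiedBy_groundXY edb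
  exact ⟨hℓ.existsUnique_isStableModel, fun N Ms hrun =>
    IsRun.isStableModel_assemble hrun hxy.1⟩
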